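/- arXiv:1808.10114 — 4 statements merged into one kernel-verified Lean document; each statement's English description precedes it below -/
import Mathlib

section
/- Let A = ⊕_{n∈ℤ} A_n be a ℤ-graded ring, let R be a subring of A_0, and let I ⊆ A_1 and J ⊆ A_{-1} be additive subgroups such that RI ⊆ I, IR ⊆ I, RJ ⊆ J, JR ⊆ J, JI ⊆ R, and such that for any finite subset {j_1,…,j_m} ⊆ J there exists b ∈ IJ with j_l b = j_l for each 1 ≤ l ≤ m. Then IJ ∩ R ⊆ ann_R(I)^⊥, i.e. every element x ∈ IJ with x ∈ R satisfies xy = yx = 0 for all y ∈ ann_R(I). -/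
/-- The additive subgroup generated by products `x * y` with `x ∈ X`, `y ∈ Y`. -/
def subMul {A : Type*} [NonUnitalRing A] (X Y : AddSubgroup A) : AddSubgroup A :=
  AddSubgroup.closure {a | ∃ x ∈ X, ∃ y ∈ Y, a = x * y}

/-- `ann_R(I)`: the elements of `R` annihilating `I` on the left. -/
def annSet {A : Type*} [NonUnitalRing A] (R I : Set A) : Set A :=
  {r ∈ R | ∀ x ∈ I, r * x = 0}

/-- `ann_R(I)^⊥`: the elements of `R` annihilating `ann_R(I)` on both sides. -/
def perpSet {A : Type*} [NonUnitalRing A] (R I : Set A) : Set A :=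
  {r ∈ R | ∀ y ∈ annSet R I, r * y = 0 ∧ y * r = 0}

/-!
An element `y ∈ ann_R(I)` kills `IJ` from the left, so `y x = 0`. For `x y`, note that
`x y ∈ IJ` because `JR ⊆ J`; an element of `IJ` only involves finitely many elements of `J`,
so it has a right local unit `b ∈ IJ`, and then `x y = x y b = x (y b) = 0`.
-/

section subMul

variable {A : Type*} [NonUnitalRing A] {X Y : AddSubgroup A}

theorem mul_eq_zero_of_mem_subMul {y b : A} (hy : ∀ x ∈ X, y * x = 0) (hb : b ∈ subMul X Y) :
    y * b = 0 := by
  induction hb using AddSubgroup.closure_induction with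
  | mem a ha =>
    obtain ⟨x, hx, j, -, rfl⟩ := ha
    rw [← mul_assoc, hy x hx, zero_mul]
  | zero => exact mul_zero y
  | add a c _ _ ha hc => rw [mul_add, ha, hc, add_zero]
  | neg a _ ha => rw [mul_neg, ha, neg_zero]

theorem subMul_mul_mem {r b : A} (hr : ∀ j ∈ Y, j * r ∈ Y) (hb : b ∈ subMul X Y) :
    b * r ∈ subMul X Y := by
  induction hb using AddSubgroup.closure_induction with
  | mem a ha =>
    obtain ⟨x, hx, j, hj, rfl⟩ := ha
    rw [mul_assoc]
    exact AddSubgroup.subset_closure ⟨x, hx, j * r, hr j hj, rfl⟩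
  | zero => rw [zero_mul]; exact zero_mem _
  | add a c _ _ ha hc => rw [add_mul]; exact add_mem ha hc
  | neg a _ ha => rw [neg_mul]; exact neg_mem ha

theorem exists_finset_forall_mul_eq_of_mem_subMul {z : A} (hz : z ∈ subMul X Y) :
    ∃ s : Finset A, (s : Set A) ⊆ Y ∧ ∀ b : A, (∀ j ∈ s, j * b = j) → z * b = z := by
  classical
  induction hz using AddSubgroup.closure_induction with
  | mem a ha =>
    obtain ⟨x, -, j, hj, rfl⟩ := ha
    refine ⟨{j}, by simpa using hj, fun b hb => ?_⟩
    rw [mul_assoc, hb j (Finset.mem_singleton_self j)]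
  | zero => exact ⟨∅, by simp, fun b _ => zero_mul b⟩
  | add a c _ _ ha hc =>
    obtain ⟨s, hsY, hs⟩ := ha
    obtain ⟨t, htY, ht⟩ := hc
    refine ⟨s ∪ t, by simpa [Finset.coe_union] using And.intro hsY htY, fun b hb => ?_⟩
    rw [add_mul, hs b fun j hj => hb j (Finset.mem_union_left t hj),
      ht b fun j hj => hb j (Finset.mem_union_right s hj)]
  | neg a _ ha =>
    obtain ⟨s, hsY, hs⟩ := ha
    exact ⟨s, hsY, fun b hb => by rw [neg_mul, hs b hb]⟩

theorem exists_mul_eq_self_of_mem_subMul {U : Set A}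
    (hU : ∀ s : Finset A, (s : Set A) ⊆ Y → ∃ b ∈ U, ∀ j ∈ s, j * b = j) {z : A}
    (hz : z ∈ subMul X Y) : ∃ b ∈ U, z * b = z := by
  obtain ⟨s, hsY, hs⟩ := exists_finset_forall_mul_eq_of_mem_subMul hz
  obtain ⟨b, hbU, hb⟩ := hU s hsY
  exact ⟨b, hbU, hs b hb⟩

end subMul

theorem stmt0_general {A : Type*} [NonUnitalRing A]
    (R : NonUnitalSubring A)
    (I J : AddSubgroup A)
    (hJR : ∀ j ∈ J, ∀ r ∈ R, j * r ∈ J)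
    (hFSJ : ∀ s : Finset A, (↑s : Set A) ⊆ (J : Set A) →
      ∃ b ∈ subMul I J, ∀ j ∈ s, j * b = j) :
    (subMul I J : Set A) ∩ (R : Set A) ⊆ perpSet (R : Set A) (I : Set A) := by
  rintro x ⟨hxIJ, hxR⟩
  have hann : ∀ y ∈ annSet (R : Set A) (I : Set A), ∀ b ∈ subMul I J, y * b = 0 :=
    fun y hy _ hb => mul_eq_zero_of_mem_subMul hy.2 hb
  refine ⟨hxR, fun y hy => ⟨?_, hann y hy x hxIJ⟩⟩
  have hxy : x * y ∈ subMul I J := subMul_mul_mem (fun j hj => hJR j hj y hy.1) hxIJ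
  obtain ⟨b, hbIJ, hxyb⟩ := exists_mul_eq_self_of_mem_subMul hFSJ hxy
  rw [← hxyb, mul_assoc, hann y hy b hbIJ, mul_zero]

/-- Let `A = ⊕_{n∈ℤ} A_n` be a `ℤ`-graded ring, `R` a subring of `A_0`, and
`I ⊆ A_1`, `J ⊆ A_{-1}` additive subgroups with `RI ⊆ I`, `IR ⊆ I`, `RJ ⊆ J`,
`JR ⊆ J`, `JI ⊆ R`, and such that any finite subset of `J` admits a right
"local unit" from `IJ`.  Then `IJ ∩ R ⊆ ann_R(I)^⊥`. -/
theorem stmt0 {A : Type*} [NonUnitalRing A]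
    (𝒜 : ℤ → AddSubgroup A)
    (hdecomp : DirectSum.IsInternal 𝒜)
    (hgmul : ∀ m n : ℤ, ∀ x ∈ 𝒜 m, ∀ y ∈ 𝒜 n, x * y ∈ 𝒜 (m + n))
    (R : NonUnitalSubring A) (hR : (R : Set A) ⊆ (𝒜 0 : Set A))
    (I J : AddSubgroup A)
    (hI : (I : Set A) ⊆ (𝒜 1 : Set A))
    (hJ : (J : Set A) ⊆ (𝒜 (-1) : Set A))
    (hRI : ∀ r ∈ R, ∀ i ∈ I, r * i ∈ I)
    (hIR : ∀ i ∈ I, ∀ r ∈ R, i * r ∈ I)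
    (hRJ : ∀ r ∈ R, ∀ j ∈ J, r * j ∈ J)
    (hJR : ∀ j ∈ J, ∀ r ∈ R, j * r ∈ J)
    (hJI : ∀ j ∈ J, ∀ i ∈ I, j * i ∈ R)
    (hFSJ : ∀ s : Finset A, (↑s : Set A) ⊆ (J : Set A) →
      ∃ b ∈ subMul I J, ∀ j ∈ s, j * b = j) :
    (subMul I J : Set A) ∩ (R : Set A) ⊆ perpSet (R : Set A) (I : Set A) :=
  stmt0_general R I J hJR hFSJ
end

section
/- Let A = ⊕_{n∈ℤ} A_n be a ℤ-graded ring, let R be a subring of A_0, and let I ⊆ A_1 and J ⊆ A_{-1} be additive subgroups satisfying: (1) RI ⊆ I, IR ⊆ I, RJ ⊆ J, JR ⊆ J, JI ⊆ R; (2) for any finite subset {i_1,…,i_n} ⊆ I there exists a ∈ IJ with a i_l = i_l for each l, and for any finite subset {j_1,…,j_m} ⊆ J there exists b ∈ IJ with j_l b = j_l for each l; (3) for all r ∈ ann_R(I)^⊥ and a ∈ IJ, if (r−a)x = 0 for all x ∈ I then a ∈ R; (4) ann_R(I) ∩ ann_R(I)^⊥ = {0}. Then {r ∈ R : there exists a ∈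 IJ such that rx = ax for all x ∈ I} ∩ ann_R(I)^⊥ = IJ ∩ R. -/
/-!
If `r ∈ ann_R(I)^⊥` acts on `I` like `a ∈ IJ`, condition (3) puts `a` in `R`, so `r - a` lies
in `ann_R(I)`. Every element of `ann_R(I)` kills `IJ` on the left (as it kills `I`) and on the
right (writing `x j y = x (j y) b` with a right local unit `b ∈ IJ` for `j y ∈ J`), so
`IJ ∩ R ⊆ ann_R(I)^⊥`; hence `r - a` also lies in `ann_R(I)^⊥` and vanishes by condition (4).
-/

section

variable {A : Type*} [NonUnitalRing A] {X Y : AddSubgroup A} {y a : A}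

theorem mul_subMul_eq_zero (hy : ∀ x ∈ X, y * x = 0) (ha : a ∈ subMul X Y) : y * a = 0 := by
  suffices subMul X Y ≤ (AddMonoidHom.mulLeft y).ker from this ha
  rw [subMul, AddSubgroup.closure_le]
  rintro _ ⟨x, hx, z, -, rfl⟩
  simp [← mul_assoc, hy x hx]

theorem subMul_mul_eq_zero (hunit : ∀ j ∈ Y, ∃ b ∈ subMul X Y, j * b = j)
    (hYy : ∀ j ∈ Y, j * y ∈ Y) (hy : ∀ x ∈ X, y * x = 0) (ha : a ∈ subMul X Y) :
    a * y = 0 := by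
  suffices subMul X Y ≤ (AddMonoidHom.mulRight y).ker from this ha
  rw [subMul, AddSubgroup.closure_le]
  rintro _ ⟨x, -, j, hj, rfl⟩
  obtain ⟨b, hb, hjyb⟩ := hunit (j * y) (hYy j hj)
  have hkill : ∀ u ∈ X, x * (j * y) * u = 0 := fun u hu => by
    rw [mul_assoc, mul_assoc, hy u hu, mul_zero, mul_zero]
  calc x * j * y = x * (j * y) * b := by rw [mul_assoc, mul_assoc, hjyb]
    _ = 0 := mul_subMul_eq_zero hkill hb

theorem sub_mem_perpSet {R : NonUnitalSubring A} {I : Set A} {r s : A}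
    (hr : r ∈ perpSet (R : Set A) I) (hs : s ∈ perpSet (R : Set A) I) :
    r - s ∈ perpSet (R : Set A) I :=
  ⟨R.sub_mem hr.1 hs.1, fun z hz => by
    simp [sub_mul, mul_sub, (hr.2 z hz).1, (hr.2 z hz).2, (hs.2 z hz).1, (hs.2 z hz).2]⟩

theorem mem_perpSet_of_mem_subMul {R : NonUnitalSubring A} {I J : AddSubgroup A}
    (hunit : ∀ j ∈ J, ∃ b ∈ subMul I J, j * b = j) (hJR : ∀ j ∈ J, ∀ r ∈ R, j * r ∈ J)
    (ha : a ∈ subMul I J) (haR : a ∈ R) : a ∈ perpSet (R : Set A) (I : Set A) :=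
  ⟨haR, fun _ hz =>
    ⟨subMul_mul_eq_zero hunit (fun j hj => hJR j hj _ hz.1) hz.2 ha, mul_subMul_eq_zero hz.2 ha⟩⟩

end

theorem stmt2_general {A : Type*} [NonUnitalRing A]
    (R : NonUnitalSubring A)
    (I J : AddSubgroup A)
    -- Condition (1)
    (hJR : ∀ j ∈ J, ∀ r ∈ R, j * r ∈ J)
    -- Condition (2)
    (hFSJ : ∀ s : Finset A, (↑s : Set A) ⊆ (J : Set A) →
      ∃ b ∈ subMul I J, ∀ j ∈ s, j * b = j)
    -- Condition (3)
    (hcond3 : ∀ r ∈ perpSet (R : Set A) (I : Set A), ∀ a ∈ subMul I J,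
      (∀ x ∈ I, (r - a) * x = 0) → a ∈ R)
    -- Condition (4)
    (hcond4 : ∀ r : A, r ∈ annSet (R : Set A) (I : Set A) →
      r ∈ perpSet (R : Set A) (I : Set A) → r = 0) :
    {r : A | r ∈ R ∧ ∃ a ∈ subMul I J, ∀ x ∈ I, r * x = a * x} ∩
        perpSet (R : Set A) (I : Set A) =
      (subMul I J : Set A) ∩ (R : Set A) := by
  have hunit : ∀ j ∈ J, ∃ b ∈ subMul I J, j * b = j := fun j hj => by
    obtain ⟨b, hb, hjb⟩ := hFSJ {j} (by simpa using hj)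
    exact ⟨b, hb, hjb j (Finset.mem_singleton_self j)⟩
  ext r
  constructor
  · rintro ⟨⟨hrR, a, ha, hra⟩, hrP⟩
    have hkill : ∀ x ∈ I, (r - a) * x = 0 := fun x hx => by rw [sub_mul, hra x hx, sub_self]
    have haR : a ∈ R := hcond3 r hrP a ha hkill
    have hra0 : r - a = 0 := hcond4 _ ⟨R.sub_mem hrR haR, hkill⟩
      (sub_mem_perpSet hrP (mem_perpSet_of_mem_subMul hunit hJR ha haR))
    rw [sub_eq_zero.mp hra0]
    exact ⟨ha, haR⟩
  · rintro ⟨ha, haR⟩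
    exact ⟨⟨haR, r, ha, fun _ _ => rfl⟩, mem_perpSet_of_mem_subMul hunit hJR ha haR⟩

/-- Let `A = ⊕_{n∈ℤ} A_n` be a `ℤ`-graded ring, `R` a subring of `A_0`, and
`I ⊆ A_1`, `J ⊆ A_{-1}` additive subgroups satisfying conditions (1)–(4) of
Theorem 3.1.  Then `Δ⁻¹(F_J(I)) ∩ ann_R(I)^⊥ = IJ ∩ R`, where the left-hand
set is `{r ∈ R : ∃ a ∈ IJ, r x = a x for all x ∈ I}`. -/
theorem stmt2 {A : Type*} [NonUnitalRing A]
    (𝒜 : ℤ → AddSubgroup A)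
    (hdecomp : DirectSum.IsInternal 𝒜)
    (hgmul : ∀ m n : ℤ, ∀ x ∈ 𝒜 m, ∀ y ∈ 𝒜 n, x * y ∈ 𝒜 (m + n))
    (R : NonUnitalSubring A) (hR : (R : Set A) ⊆ (𝒜 0 : Set A))
    (I J : AddSubgroup A)
    (hI : (I : Set A) ⊆ (𝒜 1 : Set A))
    (hJ : (J : Set A) ⊆ (𝒜 (-1) : Set A))
    -- Condition (1)
    (hRI : ∀ r ∈ R, ∀ i ∈ I, r * i ∈ I)
    (hIR : ∀ i ∈ I, ∀ r ∈ R, i * r ∈ I)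
    (hRJ : ∀ r ∈ R, ∀ j ∈ J, r * j ∈ J)
    (hJR : ∀ j ∈ J, ∀ r ∈ R, j * r ∈ J)
    (hJI : ∀ j ∈ J, ∀ i ∈ I, j * i ∈ R)
    -- Condition (2)
    (hFSI : ∀ s : Finset A, (↑s : Set A) ⊆ (I : Set A) →
      ∃ a ∈ subMul I J, ∀ i ∈ s, a * i = i)
    (hFSJ : ∀ s : Finset A, (↑s : Set A) ⊆ (J : Set A) →
      ∃ b ∈ subMul I J, ∀ j ∈ s, j * b = j)
    -- Condition (3)
    (hcond3 : ∀ r ∈ perpSet (R : Set A) (I : Set A), ∀ a ∈ subMul I J,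
      (∀ x ∈ I, (r - a) * x = 0) → a ∈ R)
    -- Condition (4)
    (hcond4 : ∀ r : A, r ∈ annSet (R : Set A) (I : Set A) →
      r ∈ perpSet (R : Set A) (I : Set A) → r = 0) :
    {r : A | r ∈ R ∧ ∃ a ∈ subMul I J, ∀ x ∈ I, r * x = a * x} ∩
        perpSet (R : Set A) (I : Set A) =
      (subMul I J : Set A) ∩ (R : Set A) :=
  stmt2_general R I J hJR hFSJ hcond3 hcond4
end

section
/- Let A = ⊕_{n∈ℤ} A_n be a strongly ℤ-graded ring with graded local units. If r ∈ A_0 satisfies rx = 0 for all x ∈ A_1, then r = 0; that is, ann_{A_0}(A_1) = {0}. -/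
/-!
If `r ∈ A_0` kills `A_1`, it kills `A_1 A_{-1} = A_0`. A homogeneous local unit `e` of `r`
gives `r = r e`; if `deg e = 0` this is `0`, and otherwise `r = r e` is homogeneous of degree
`deg e ≠ 0` as well as of degree `0`, hence `0`.
-/

theorem DirectSum.IsInternal.eq_zero_of_mem_of_mem {ι G : Type*} [DecidableEq ι]
    [AddCommGroup G] {𝒜 : ι → AddSubgroup G} (h : DirectSum.IsInternal 𝒜) {m n : ι}
    (hmn : m ≠ n) {x : G} (hm : x ∈ 𝒜 m) (hn : x ∈ 𝒜 n) : x = 0 :=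
  AddSubgroup.disjoint_def.mp ((h.addSubgroup_iSupIndep).pairwiseDisjoint hmn) hm hn

theorem mul_eq_zero_of_mem_subMul_s4 {A : Type*} [NonUnitalRing A] {X : AddSubgroup A}
    (Y : AddSubgroup A) {r : A} (hr : ∀ x ∈ X, r * x = 0) :
    ∀ z ∈ subMul X Y, r * z = 0 := by
  suffices subMul X Y ≤ (AddMonoidHom.mulLeft r).ker from fun z hz => this hz
  refine AddSubgroup.closure_le _ |>.mpr ?_
  rintro _ ⟨x, hx, y, -, rfl⟩
  simp [← mul_assoc, hr x hx]

theorem eq_zero_of_mem_zero_of_forall_mul_eq_zero {ι A : Type*} [AddMonoid ι] [DecidableEq ι]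
    [NonUnitalRing A] {𝒜 : ι → AddSubgroup A} (hdecomp : DirectSum.IsInternal 𝒜)
    (hgmul : ∀ m n : ι, ∀ x ∈ 𝒜 m, ∀ y ∈ 𝒜 n, x * y ∈ 𝒜 (m + n))
    (hglu : ∀ s : Finset A, (∀ x ∈ s, ∃ n : ι, x ∈ 𝒜 n) →
      ∃ e : A, (∃ n : ι, e ∈ 𝒜 n) ∧ e * e = e ∧ ∀ x ∈ s, ∃ a : A, x = e * a * e)
    {r : A} (hr : r ∈ 𝒜 0) (hann : ∀ x ∈ 𝒜 0, r * x = 0) : r = 0 := by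
  obtain ⟨e, ⟨n, hen⟩, hee, hloc⟩ := hglu {r} (by simpa using ⟨0, hr⟩)
  obtain ⟨a, hra⟩ := hloc r (Finset.mem_singleton_self r)
  have hre : r * e = r := by rw [hra, mul_assoc, mul_assoc, hee, ← mul_assoc]
  by_cases hn : n = 0
  · subst hn
    rw [← hre, hann e hen]
  · have hrn : r ∈ 𝒜 n := hre ▸ zero_add n ▸ hgmul 0 n r hr e hen
    exact hdecomp.eq_zero_of_mem_of_mem hn hrn hr

/-- If `A = ⊕_{n∈ℤ} A_n` is a strongly `ℤ`-graded ring with graded local units,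
then `ann_{A_0}(A_1) = {0}`: any `r ∈ A_0` with `r x = 0` for all `x ∈ A_1` is
zero. -/
theorem stmt4 {A : Type*} [NonUnitalRing A]
    (𝒜 : ℤ → AddSubgroup A)
    (hdecomp : DirectSum.IsInternal 𝒜)
    (hgmul : ∀ m n : ℤ, ∀ x ∈ 𝒜 m, ∀ y ∈ 𝒜 n, x * y ∈ 𝒜 (m + n))
    -- `A` is strongly graded
    (hstrong : ∀ m n : ℤ, subMul (𝒜 m) (𝒜 n) = 𝒜 (m + n))
    -- `A` has graded local units
    (hglu : ∀ s : Finset A, (∀ x ∈ s, ∃ n : ℤ, x ∈ 𝒜 n) →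
      ∃ e : A, (∃ n : ℤ, e ∈ 𝒜 n) ∧ e * e = e ∧ ∀ x ∈ s, ∃ a : A, x = e * a * e) :
    ∀ r ∈ 𝒜 0, (∀ x ∈ 𝒜 1, r * x = 0) → r = 0 := by
  intro r hr hann
  have hA0 : 𝒜 0 = subMul (𝒜 1) (𝒜 (-1)) := by simpa using (hstrong 1 (-1)).symm
  refine eq_zero_of_mem_zero_of_forall_mul_eq_zero hdecomp hgmul hglu hr ?_
  rw [hA0]
  exact mul_eq_zero_of_mem_subMul_s4 _ hann
end

section
/- Let A = ⊕_{n∈ℤ} A_n be a strongly ℤ-graded ring with graded local units. Then for any finite subset {a_1,…,a_n} ⊆ A_1 there exists r ∈ A_1 A_{-1} such that r a_l = a_l for each 1 ≤ l ≤ n, and for any finite subset {b_1,…,b_m} ⊆ A_{-1} there exists s ∈ A_1 A_{-1} such that b_l s = b_l for each 1 ≤ l ≤ m. -/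
theorem IsIdempotentElem.mul_corner {R : Type*} [Semigroup R] {e : R} (he : IsIdempotentElem e)
    (a : R) : e * (e * a * e) = e * a * e := by
  rw [← mul_assoc, ← mul_assoc, he.eq]

theorem IsIdempotentElem.corner_mul {R : Type*} [Semigroup R] {e : R} (he : IsIdempotentElem e)
    (a : R) : e * a * e * e = e * a * e := by
  rw [mul_assoc, he.eq]

namespace DirectSum.IsInternal

variable {ι A : Type*} [DecidableEq ι]

theorem eq_zero_of_mem_of_mem_s5 [AddCommGroup A] {𝒜 : ι → AddSubgroup A} (h : IsInternal 𝒜)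
    {i j : ι} (hij : i ≠ j) {x : A} (hi : x ∈ 𝒜 i) (hj : x ∈ 𝒜 j) : x = 0 :=
  AddSubgroup.disjoint_def.mp (h.addSubgroup_iSupIndep.pairwiseDisjoint hij) hi hj

variable [AddCancelMonoid ι] [NonUnitalRing A] {𝒜 : ι → AddSubgroup A}

theorem mem_zero_of_isIdempotentElem (h : IsInternal 𝒜)
    (hgmul : ∀ m n : ι, ∀ x ∈ 𝒜 m, ∀ y ∈ 𝒜 n, x * y ∈ 𝒜 (m + n))
    {e : A} {k : ι} (hek : e ∈ 𝒜 k) (he : IsIdempotentElem e) : e ∈ 𝒜 0 := by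
  by_cases hk : k = 0
  · exact hk ▸ hek
  · have hek2 : e ∈ 𝒜 (k + k) := he.eq ▸ hgmul k k e hek e hek
    rw [h.eq_zero_of_mem_of_mem_s5 (by simpa using hk) hek2 hek]
    exact zero_mem _

theorem exists_two_sided_unit_mem_zero (h : IsInternal 𝒜)
    (hgmul : ∀ m n : ι, ∀ x ∈ 𝒜 m, ∀ y ∈ 𝒜 n, x * y ∈ 𝒜 (m + n))
    (hglu : ∀ s : Finset A, (∀ x ∈ s, ∃ n : ι, x ∈ 𝒜 n) →
      ∃ e : A, (∃ n : ι, e ∈ 𝒜 n) ∧ e * e = e ∧ ∀ x ∈ s, ∃ a : A, x = e * a * e)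
    (s : Finset A) (hs : ∀ x ∈ s, ∃ n : ι, x ∈ 𝒜 n) :
    ∃ e ∈ 𝒜 0, ∀ x ∈ s, e * x = x ∧ x * e = x := by
  obtain ⟨e, ⟨k, hek⟩, he, hcorner⟩ := hglu s hs
  refine ⟨e, h.mem_zero_of_isIdempotentElem hgmul hek he, fun x hx => ?_⟩
  obtain ⟨a, rfl⟩ := hcorner x hx
  exact ⟨IsIdempotentElem.mul_corner he a, IsIdempotentElem.corner_mul he a⟩

end DirectSum.IsInternal

/-- If `A = ⊕_{n∈ℤ} A_n` is a strongly `ℤ`-graded ring with graded local units,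
then any finite subset of `A_1` admits a left "local unit" from `A_1 A_{-1}`,
and any finite subset of `A_{-1}` admits a right "local unit" from `A_1 A_{-1}`. -/
theorem stmt5 {A : Type*} [NonUnitalRing A]
    (𝒜 : ℤ → AddSubgroup A)
    (hdecomp : DirectSum.IsInternal 𝒜)
    (hgmul : ∀ m n : ℤ, ∀ x ∈ 𝒜 m, ∀ y ∈ 𝒜 n, x * y ∈ 𝒜 (m + n))
    -- `A` is strongly graded
    (hstrong : ∀ m n : ℤ, subMul (𝒜 m) (𝒜 n) = 𝒜 (m + n))
    -- `A` has graded local units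
    (hglu : ∀ s : Finset A, (∀ x ∈ s, ∃ n : ℤ, x ∈ 𝒜 n) →
      ∃ e : A, (∃ n : ℤ, e ∈ 𝒜 n) ∧ e * e = e ∧ ∀ x ∈ s, ∃ a : A, x = e * a * e) :
    (∀ s : Finset A, (↑s : Set A) ⊆ (𝒜 1 : Set A) →
      ∃ r ∈ subMul (𝒜 1) (𝒜 (-1)), ∀ a ∈ s, r * a = a) ∧
    (∀ s : Finset A, (↑s : Set A) ⊆ (𝒜 (-1) : Set A) →
      ∃ t ∈ subMul (𝒜 1) (𝒜 (-1)), ∀ b ∈ s, b * t = b) := by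
  have hsub : subMul (𝒜 1) (𝒜 (-1)) = 𝒜 0 := by simpa using hstrong 1 (-1)
  constructor
  · intro s hs
    obtain ⟨e, he0, he⟩ :=
      hdecomp.exists_two_sided_unit_mem_zero hgmul hglu s fun x hx => ⟨1, hs hx⟩
    exact ⟨e, hsub ▸ he0, fun a ha => (he a ha).1⟩
  · intro s hs
    obtain ⟨e, he0, he⟩ :=
      hdecomp.exists_two_sided_unit_mem_zero hgmul hglu s fun x hx => ⟨-1, hs hx⟩
    exact ⟨e, hsub ▸ he0, fun b hb => (he b hb).2⟩
end
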